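/- Let n ≥ 1, E ∈ ℝⁿ \ {0}, let v : ℝ × ℝⁿ → ℂ with v(t,·) differentiable and x v(t,·), v(t,·), ∇_x v(t,·) ∈ L²(ℝⁿ) for each t, and define u(t,x) = v(t, x + (t²/2)E) · exp(−i(t E·x + (t³/6)|E|²)) (the case ε = 1). Then for every t ∈ ℝ, ‖J_E(t)u(t,·)‖_{L²(ℝⁿ)} = ‖J(t)v(t,·)‖_{L²(ℝⁿ)}, where J_E(t)u = x u + i t ∇_x u − (t²/2) E u and J(t)v = x v + i t ∇_x v are ℂⁿ-valued, the norm being the L² norm with the Euclidean norm on ℂⁿ inside the integral. -/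

import Mathlib

/-!
The Avron–Herbst transform `u(t, x) = v(t, x + (t²/2)E) e^{-iφ(t, x)}` with the phase
`φ(t, x) = t E·x + (t³/6)|E|²` satisfies, pointwise,
`J_E(t)u(t, x) = e^{-iφ(t, x)} J(t)v(t, x + (t²/2)E)`:
differentiating the phase produces `t²E u`, which turns the `-(t²/2)E u` of `J_E` into the
`+(t²/2)E` that shifts `x` to `x + (t²/2)E`. The phase has modulus one and Lebesgue measure is
translation invariant, so the two `L²` norms agree.
-/

open Complex MeasureTheory
open scoped InnerProductSpace

theorem eLpNorm_comp_add_right {G ε : Type*} [MeasurableSpace G] [AddGroup G] [MeasurableAdd G]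
    [TopologicalSpace ε] [ContinuousENorm ε]
    (μ : Measure G) [μ.IsAddRightInvariant] (f : G → ε) (a : G) (p : ENNReal) :
    eLpNorm (fun x => f (x + a)) p μ = eLpNorm f p μ := by
  conv_rhs => rw [← map_add_right_eq_self μ a]
  exact ((MeasurableEquiv.addRight a).measurableEmbedding.eLpNorm_map_measure).symm

theorem enorm_exp_neg_I_mul_ofReal (r : ℝ) : ‖exp (-(I * r))‖ₑ = 1 := by
  rw [show -(I * r) = I * ((-r : ℝ) : ℂ) by push_cast; ring]
  exact enorm_exp_I_mul_ofReal _

theorem fderiv_comp_add_right_mul_exp_inner {F : Type*} [NormedAddCommGroup F]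
    [InnerProductSpace ℝ F] {v : F → ℂ} (a E : F) (t c : ℝ) {x : F}
    (hv : DifferentiableAt ℝ v (x + a)) (y : F) :
    fderiv ℝ (fun x => v (x + a) * exp (-(I * ((t * ⟪E, x⟫_ℝ + c : ℝ) : ℂ)))) x y
      = exp (-(I * ((t * ⟪E, x⟫_ℝ + c : ℝ) : ℂ)))
          * (fderiv ℝ v (x + a) y - I * t * ⟪E, y⟫_ℝ * v (x + a)) := by
  have hshift : HasFDerivAt (fun x => v (x + a)) (fderiv ℝ v (x + a)) x :=
    hv.hasFDerivAt.comp x ((hasFDerivAt_id x).add_const a)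
  have hphase : HasFDerivAt (fun x => -(I * ((t * ⟪E, x⟫_ℝ + c : ℝ) : ℂ)))
      (-(I • ofRealCLM.comp (t • innerSL ℝ E))) x :=
    ((ofRealCLM.hasFDerivAt.comp x
      (((innerSL ℝ E).hasFDerivAt.const_mul t).add_const c)).const_mul I).neg
  -- `HasFDerivAt.mul` speaks of the product `f * g`; the ascription restates it pointwise for `rw`
  have hderiv : fderiv ℝ (fun x => v (x + a) * exp (-(I * ((t * ⟪E, x⟫_ℝ + c : ℝ) : ℂ)))) x = _ :=
    (hshift.mul hphase.cexp).fderiv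
  rw [hderiv]
  simp only [ofReal_add, ofReal_mul, ContinuousLinearMap.comp_smulₛₗ, Real.ringHom_apply, smul_neg,
    add_apply, neg_apply, smul_apply, ContinuousLinearMap.comp_apply, coe_innerSL_apply,
    ofRealCLM_apply, real_smul, smul_eq_mul]
  ring

namespace AvronHerbst

variable {ι : Type*} [Fintype ι] [DecidableEq ι]

noncomputable def transform (E : EuclideanSpace ℝ ι) (t : ℝ) (w : EuclideanSpace ℝ ι → ℂ)
    (x : EuclideanSpace ℝ ι) : ℂ :=
  w (x + (t ^ 2 / 2) • E) * exp (-(I * ((t * ⟪E, x⟫_ℝ + t ^ 3 / 6 * ‖E‖ ^ 2 : ℝ) : ℂ)))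

-- `galilean t w` is `J(t)w` and `stark E t w` is `J_E(t)w`, as `ℂⁿ`-valued functions.
noncomputable def galilean (t : ℝ) (w : EuclideanSpace ℝ ι → ℂ) (x : EuclideanSpace ℝ ι) :
    EuclideanSpace ℂ ι :=
  WithLp.toLp 2 fun i => ((x i : ℝ) : ℂ) * w x + I * t * fderiv ℝ w x (EuclideanSpace.single i 1)

noncomputable def stark (E : EuclideanSpace ℝ ι) (t : ℝ) (w : EuclideanSpace ℝ ι → ℂ)
    (x : EuclideanSpace ℝ ι) : EuclideanSpace ℂ ι :=
  WithLp.toLp 2 fun i => ((x i : ℝ) : ℂ) * w x + I * t * fderiv ℝ w x (EuclideanSpace.single i 1)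
    - ((t ^ 2 / 2 : ℝ) : ℂ) * (E i : ℝ) * w x

theorem stark_transform (E : EuclideanSpace ℝ ι) (t : ℝ) {w : EuclideanSpace ℝ ι → ℂ}
    {x : EuclideanSpace ℝ ι} (hw : DifferentiableAt ℝ w (x + (t ^ 2 / 2) • E)) :
    stark E t (transform E t w) x
      = exp (-(I * ((t * ⟪E, x⟫_ℝ + t ^ 3 / 6 * ‖E‖ ^ 2 : ℝ) : ℂ)))
          • galilean t w (x + (t ^ 2 / 2) • E) := by
  ext i
  have hshift : ((x + (t ^ 2 / 2) • E) i : ℝ) = x i + t ^ 2 / 2 * E i := rfl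
  unfold transform
  simp only [stark, galilean, fderiv_comp_add_right_mul_exp_inner _ _ _ _ hw,
    EuclideanSpace.inner_single_right, conj_trivial, one_mul, PiLp.smul_apply, smul_eq_mul,
    hshift]
  push_cast
  linear_combination (-(t : ℂ) ^ 2 * E i * w (x + (t ^ 2 / 2) • E)
    * exp (-(I * (t * ⟪E, x⟫_ℝ + t ^ 3 / 6 * ‖E‖ ^ 2)))) * I_sq

theorem enorm_stark_transform (E : EuclideanSpace ℝ ι) (t : ℝ) {w : EuclideanSpace ℝ ι → ℂ}
    (hw : Differentiable ℝ w) (x : EuclideanSpace ℝ ι) :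
    ‖stark E t (transform E t w) x‖ₑ = ‖galilean t w (x + (t ^ 2 / 2) • E)‖ₑ := by
  rw [stark_transform E t (hw _), enorm_smul, enorm_exp_neg_I_mul_ofReal, one_mul]

end AvronHerbst

open AvronHerbst in
theorem stmt_13_general {n : ℕ}
    (E : EuclideanSpace ℝ (Fin n))
    (v : ℝ → EuclideanSpace ℝ (Fin n) → ℂ)
    (hv_diff : ∀ t, Differentiable ℝ (v t))
    (u : ℝ → EuclideanSpace ℝ (Fin n) → ℂ)
    (hu : ∀ t x, u t x = v t (x + (t ^ 2 / 2) • E) *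
      Complex.exp (-(Complex.I * ((t * ⟪E, x⟫_ℝ + t ^ 3 / 6 * ‖E‖ ^ 2 : ℝ) : ℂ)))) :
    ∀ t : ℝ,
      eLpNorm (fun x => (WithLp.toLp 2 fun i =>
          ((x i : ℝ) : ℂ) * u t x
            + Complex.I * t * fderiv ℝ (u t) x (EuclideanSpace.single i 1)
            - ((t ^ 2 / 2 : ℝ) : ℂ) * (E i : ℝ) * u t x :
        EuclideanSpace ℂ (Fin n))) 2 volume
      = eLpNorm (fun x => (WithLp.toLp 2 fun i =>
          ((x i : ℝ) : ℂ) * v t x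
            + Complex.I * t * fderiv ℝ (v t) x (EuclideanSpace.single i 1) :
        EuclideanSpace ℂ (Fin n))) 2 volume := by
  intro t
  have hut : u t = transform E t (v t) := funext (hu t)
  change eLpNorm (stark E t (u t)) 2 volume = eLpNorm (galilean t (v t)) 2 volume
  rw [hut, ← eLpNorm_comp_add_right volume (galilean t (v t)) ((t ^ 2 / 2) • E)]
  refine eLpNorm_congr_enorm_ae (ae_of_all _ fun x => ?_)
  exact enorm_stark_transform E t (hv_diff t) x

/-- under the Avron–Herbst transform (`ε = 1`), the `L²` norm of
`J_E(t)u = x u + it∇_x u − (t²/2)E u` equals that of the Galilean operator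
`J(t)v = x v + it∇_x v`. -/
theorem stmt_13 {n : ℕ} (hn : 1 ≤ n)
    (E : EuclideanSpace ℝ (Fin n)) (hE : E ≠ 0)
    (v : ℝ → EuclideanSpace ℝ (Fin n) → ℂ)
    (hv_diff : ∀ t, Differentiable ℝ (v t))
    (hv_L2 : ∀ t, MemLp (v t) 2 volume)
    (hxv_L2 : ∀ t, MemLp (fun x => (WithLp.toLp 2 fun i => ((x i : ℝ) : ℂ) * v t x :
      EuclideanSpace ℂ (Fin n))) 2 volume)
    (hgrad_L2 : ∀ t, MemLp (fun x => (WithLp.toLp 2 fun i => fderiv ℝ (v t) x (EuclideanSpace.single i 1) :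
      EuclideanSpace ℂ (Fin n))) 2 volume)
    (u : ℝ → EuclideanSpace ℝ (Fin n) → ℂ)
    (hu : ∀ t x, u t x = v t (x + (t ^ 2 / 2) • E) *
      Complex.exp (-(Complex.I * ((t * ⟪E, x⟫_ℝ + t ^ 3 / 6 * ‖E‖ ^ 2 : ℝ) : ℂ)))) :
    ∀ t : ℝ,
      eLpNorm (fun x => (WithLp.toLp 2 fun i =>
          ((x i : ℝ) : ℂ) * u t x
            + Complex.I * t * fderiv ℝ (u t) x (EuclideanSpace.single i 1)
            - ((t ^ 2 / 2 : ℝ) : ℂ) * (E i : ℝ) * u t x :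
        EuclideanSpace ℂ (Fin n))) 2 volume
      = eLpNorm (fun x => (WithLp.toLp 2 fun i =>
          ((x i : ℝ) : ℂ) * v t x
            + Complex.I * t * fderiv ℝ (v t) x (EuclideanSpace.single i 1) :
        EuclideanSpace ℂ (Fin n))) 2 volume :=
  stmt_13_general E v hv_diff u hu
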